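/- arXiv:2401.15703 — 5 statements merged into one kernel-verified Lean document; each statement's English description precedes it below -/
import Mathlib

section
/- Let F be a univariate cumulative distribution function and u ∈ ℝ such that F(u⁻) < 1 and F(x) = 1 for all x ≥ u (so F jumps to 1 at its finite right endpoint u). Then F is not in the max-domain of attraction of any nondegenerate cdf G: there are no sequences a_n > 0, b_n ∈ ℝ and no nondegenerate G with F(a_n x + b_n)^n → G(x) at every continuity point x of G. -/
open Filter Topology

/-- A (loose) notion of a univariate cumulative distribution function:
monotone, right-continuous, with values in `[0,1]`, tending to `1` at `+∞`
and to `0` at `-∞`. -/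
def IsCDF1 (F : ℝ → ℝ) : Prop :=
  Monotone F ∧ (∀ x, 0 ≤ F x ∧ F x ≤ 1) ∧
    Tendsto F atTop (𝓝 1) ∧ Tendsto F atBot (𝓝 0) ∧
    ∀ x, ContinuousWithinAt F (Set.Ici x) x

/-- A univariate distribution function is nondegenerate if it is not the cdf of
a point mass, i.e. it takes some value strictly between 0 and 1. -/
def Nondeg1 (G : ℝ → ℝ) : Prop := ∃ t, 0 < G t ∧ G t < 1

/-- `F` is in the max-domain of attraction of `G`: there are `aₙ > 0`, `bₙ ∈ ℝ`
with `F(aₙ x + bₙ)^n → G(x)` at every continuity point of `G`. -/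
def MDA1 (F G : ℝ → ℝ) : Prop :=
  ∃ a b : ℕ → ℝ, (∀ n, 0 < a n) ∧
    ∀ x, ContinuousAt G x →
      Tendsto (fun n => (F (a n * x + b n)) ^ n) atTop (𝓝 (G x))

/-- `G` is max-stable: for every `n ≥ 1` there are `αₙ > 0`, `βₙ` with
`G(αₙ x + βₙ)^n = G(x)` for all `x`. -/
def MaxStable1 (G : ℝ → ℝ) : Prop :=
  ∀ n : ℕ, 1 ≤ n → ∃ α β : ℝ, 0 < α ∧ ∀ x, (G (α * x + β)) ^ n = G x

/-- The right endpoint `x* = sup {x | F x < 1}` of a univariate cdf,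
as an extended real number. -/
noncomputable def rightEndpoint (F : ℝ → ℝ) : EReal :=
  sSup ((fun x : ℝ => (x : EReal)) '' {x | F x < 1})

/-- The filter of "x → x*⁻" (real `x` increasing to the possibly infinite
endpoint `x*`): for finite `x*` it is the left-neighborhood filter of `x*`,
and for `x* = +∞` it is `atTop`. -/
noncomputable def toLeftOf (xstar : EReal) : Filter ℝ :=
  atTop ⊓ 𝓟 {x : ℝ | (x : EReal) < xstar}

/-- A univariate cdf that jumps to `1` at a finite right endpoint
`u` (its left limit at `u` is `L < 1` and `F ≡ 1` on `[u, ∞)`) is not in the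
max-domain of attraction of any nondegenerate cdf. -/
theorem jump_to_one_not_in_mda (F : ℝ → ℝ) (u L : ℝ)
    (hF : IsCDF1 F)
    (hleft : Tendsto F (𝓝[<] u) (𝓝 L)) (hL : L < 1)
    (hone : ∀ x, u ≤ x → F x = 1) :
    ¬ ∃ G : ℝ → ℝ, IsCDF1 G ∧ Nondeg1 G ∧ MDA1 F G := by
  rintro ⟨G, hG, ⟨t, ht0, ht1⟩, a, b, hapos, hconv⟩
  obtain ⟨hGmono, hGbd, -, -, hGrc⟩ := hG
  obtain ⟨hFmono, hFbd, -, -, -⟩ := hF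
  -- basic facts about L
  have hneu : (𝓝[<] u).NeBot := by infer_instance
  have hL0 : 0 ≤ L := ge_of_tendsto hleft (Filter.Eventually.of_forall fun y => (hFbd y).1)
  have hLy : ∀ y, y < u → F y ≤ L := by
    intro y hy
    refine ge_of_tendsto hleft ?_
    filter_upwards [Ioo_mem_nhdsLT_of_mem (Set.mem_Ioc.2 ⟨hy, le_refl u⟩)] with z hz
    exact hFmono hz.1.le
  -- Step A: at continuity points, G is 0 or 1
  have stepA : ∀ x, ContinuousAt G x → G x = 0 ∨ G x = 1 := by
    intro x hx
    by_contra hne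
    push_neg at hne
    have h := hconv x hx
    have hx0 : 0 ≤ G x :=
      ge_of_tendsto h (Filter.Eventually.of_forall fun n => pow_nonneg (hFbd _).1 n)
    have hx0' : 0 < G x := lt_of_le_of_ne hx0 (Ne.symm hne.1)
    have hev1 : ∀ᶠ n in atTop, G x / 2 < (F (a n * x + b n)) ^ n :=
      h.eventually (eventually_gt_nhds (by linarith))
    have hev2 : ∀ᶠ n in atTop, L ^ n < G x / 2 :=
      (tendsto_pow_atTop_nhds_zero_of_lt_one hL0 hL).eventually
        (eventually_lt_nhds (by linarith))
    have hev : ∀ᶠ n in atTop, (F (a n * x + b n)) ^ n = 1 := by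
      filter_upwards [hev1, hev2] with n h1 h2
      by_contra hne'
      have harg : a n * x + b n < u := by
        by_contra hge
        exact hne' (by rw [hone _ (le_of_not_gt hge)]; simp)
      have : (F (a n * x + b n)) ^ n ≤ L ^ n :=
        pow_le_pow_left₀ (hFbd _).1 (hLy _ harg) n
      linarith
    have : Tendsto (fun n => (F (a n * x + b n)) ^ n) atTop (𝓝 1) :=
      Tendsto.congr' (hev.mono fun n hn => hn.symm) tendsto_const_nhds
    exact hne.2 (tendsto_nhds_unique h this)
  -- Step B: G x = 1 for all x > t
  have stepB : ∀ x, t < x → G x = 1 := by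
    intro x hx
    have hcount : Set.Countable {y | ¬ContinuousAt G y} := hGmono.countable_not_continuousAt
    obtain ⟨y, hy1, hy2⟩ := (hcount.dense_compl ℝ).exists_mem_open isOpen_Ioo
      (Set.nonempty_Ioo.2 hx)
    have hycont : ContinuousAt G y := not_not.1 hy1
    have hy0 : 0 < G y := lt_of_lt_of_le ht0 (hGmono hy2.1.le)
    have hGy : G y = 1 := by
      rcases stepA y hycont with h0 | h1
      · exact absurd h0 (ne_of_gt hy0)
      · exact h1
    exact le_antisymm (hGbd x).2 (hGy ▸ hGmono hy2.2.le)
  -- Step C: right continuity at t forces G t = 1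
  have hrc : Tendsto G (𝓝[>] t) (𝓝 (G t)) :=
    (hGrc t).mono_left (nhdsWithin_mono t Set.Ioi_subset_Ici_self)
  have : Tendsto G (𝓝[>] t) (𝓝 1) := by
    refine Tendsto.congr' ?_ tendsto_const_nhds
    filter_upwards [self_mem_nhdsWithin] with z hz
    exact (stepB z hz).symm
  exact absurd (tendsto_nhds_unique hrc this) (ne_of_lt ht1)
end

section
/- Let U = (U₁, …, U_d) be a random vector with independent components, where U_i has density f_i(x) = a_i⁻¹ exp(x/a_i) on (−∞, 0) with a_i > 0 (reverse exponential). Then E[exp(max_{1≤i≤d} U_i)] = (Σ_{i=1}^d a_i⁻¹)/(1 + Σ_{i=1}^d a_i⁻¹). -/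
/-!
With `s = ∑ i, aᵢ⁻¹`, independence gives
`P (max Uᵢ ≤ x) = ∏ i, exp (min x 0 / aᵢ) = exp (s * min x 0)`,
so the maximum is again reverse exponential, with scale `s⁻¹`. For a reverse exponential
variable `X` of scale `b`, `E[exp (t X)] = ∫_{x ≤ 0} b⁻¹ exp ((b⁻¹ + t) x) dx = (1 + b t)⁻¹`,
which is `s / (1 + s)` for `b = s⁻¹` and `t = 1`.
-/

open Real Set MeasureTheory ProbabilityTheory

namespace ProbabilityTheory

noncomputable def reverseExpMeasure (a : ℝ) : Measure ℝ :=
  volume.withDensity fun x => ENNReal.ofReal ((Iio 0).indicator (fun x => a⁻¹ * exp (x / a)) x)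

lemma reverseExpMeasure_eq_withDensity_restrict (a : ℝ) :
    reverseExpMeasure a =
      (volume.restrict (Iic 0)).withDensity fun x => ENNReal.ofReal (a⁻¹ * exp (x / a)) := by
  rw [reverseExpMeasure, ← withDensity_indicator measurableSet_Iic]
  refine withDensity_congr_ae ?_
  filter_upwards [indicator_ae_eq_of_ae_eq_set (f := fun x => a⁻¹ * exp (x / a))
    (Iio_ae_eq_Iic (a := (0 : ℝ)))] with x hx
  rw [hx, indicator_apply, indicator_apply, apply_ite ENNReal.ofReal, ENNReal.ofReal_zero]

lemma reverseExpMeasure_Iic {a : ℝ} (ha : 0 < a) (x : ℝ) :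
    reverseExpMeasure a (Iic x) = ENNReal.ofReal (exp (min x 0 / a)) := by
  have hrate : 0 < a⁻¹ := inv_pos.2 ha
  simp_rw [reverseExpMeasure_eq_withDensity_restrict, div_eq_inv_mul]
  rw [withDensity_apply _ measurableSet_Iic, Measure.restrict_restrict measurableSet_Iic,
    Iic_inter_Iic, ← ofReal_integral_eq_lintegral_ofReal
      ((integrableOn_exp_mul_Iic hrate _).const_mul _) (.of_forall fun _ => by positivity),
    integral_const_mul, integral_exp_mul_Iic hrate, mul_div_cancel₀ _ hrate.ne']

lemma integral_reverseExpMeasure {a : ℝ} (ha : 0 ≤ a) (f : ℝ → ℝ) :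
    ∫ x, f x ∂reverseExpMeasure a = ∫ x in Iic 0, a⁻¹ * exp (x / a) * f x := by
  rw [reverseExpMeasure_eq_withDensity_restrict, integral_withDensity_eq_integral_toReal_smul
    (by fun_prop) (.of_forall fun _ => ENNReal.ofReal_lt_top)]
  refine integral_congr_ae (.of_forall fun x => ?_)
  dsimp only
  rw [ENNReal.toReal_ofReal (by positivity), smul_eq_mul]

lemma integral_exp_mul_reverseExpMeasure {a t : ℝ} (ha : 0 < a) (ht : 0 < 1 + a * t) :
    ∫ x, exp (t * x) ∂reverseExpMeasure a = (1 + a * t)⁻¹ := by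
  have hrate : 0 < a⁻¹ + t := by
    have := div_pos ht ha
    rwa [add_div, one_div, mul_div_cancel_left₀ _ ha.ne'] at this
  have hdensity (x : ℝ) : a⁻¹ * exp (x / a) * exp (t * x) = a⁻¹ * exp ((a⁻¹ + t) * x) := by
    rw [mul_assoc, ← exp_add, div_eq_inv_mul, add_mul]
  simp_rw [integral_reverseExpMeasure ha.le, hdensity]
  rw [integral_const_mul, integral_exp_mul_Iic hrate, mul_zero, exp_zero]
  field_simp

theorem iIndepFun.measure_iSup_le {ι Ω β : Type*} [Fintype ι] [Nonempty ι] [MeasurableSpace Ω]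
    {P : Measure Ω} [ConditionallyCompleteLinearOrder β] [TopologicalSpace β] [MeasurableSpace β]
    [OpensMeasurableSpace β] [ClosedIicTopology β] {X : ι → Ω → β} (hX : iIndepFun X P) (x : β) :
    P {ω | ⨆ i, X i ω ≤ x} = ∏ i, P {ω | X i ω ≤ x} := by
  have hiSup_le : {ω | ⨆ i, X i ω ≤ x} = ⋂ i ∈ Finset.univ, X i ⁻¹' Iic x := by
    ext ω
    simpa using ciSup_le_iff (Finite.bddAbove_range fun i => X i ω)
  rw [hiSup_le, hX.measure_inter_preimage_eq_mul _ fun _ _ => measurableSet_Iic]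
  rfl

lemma map_iSup_eq_reverseExpMeasure {ι Ω : Type*} [Fintype ι] [Nonempty ι] [MeasurableSpace Ω]
    {P : Measure Ω} [IsProbabilityMeasure P] {a : ι → ℝ} (ha : ∀ i, 0 < a i) {U : ι → Ω → ℝ}
    (hmeas : ∀ i, Measurable (U i)) (hindep : iIndepFun U P)
    (hlaw : ∀ i, P.map (U i) = reverseExpMeasure (a i)) :
    P.map (fun ω => ⨆ i, U i ω) = reverseExpMeasure (∑ i, (a i)⁻¹)⁻¹ := by
  have hmax : Measurable fun ω => ⨆ i, U i ω := .iSup hmeas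
  have := Measure.isProbabilityMeasure_map (μ := P) hmax.aemeasurable
  have hrate : 0 < ∑ i, (a i)⁻¹ := Finset.sum_pos (fun i _ => inv_pos.2 (ha i)) Finset.univ_nonempty
  refine Measure.ext_of_Iic _ _ fun x => ?_
  calc P.map (fun ω => ⨆ i, U i ω) (Iic x)
      = ∏ i, P {ω | U i ω ≤ x} := by
        rw [Measure.map_apply hmax measurableSet_Iic]
        exact hindep.measure_iSup_le x
    _ = ∏ i, ENNReal.ofReal (exp (min x 0 / a i)) := by
        congr! 1 with i
        rw [← reverseExpMeasure_Iic (ha i), ← hlaw, Measure.map_apply (hmeas i) measurableSet_Iic]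
        rfl
    _ = reverseExpMeasure (∑ i, (a i)⁻¹)⁻¹ (Iic x) := by
        rw [reverseExpMeasure_Iic (inv_pos.2 hrate), ← ENNReal.ofReal_prod_of_nonneg
          (fun i _ => (exp_pos _).le), ← exp_sum]
        simp_rw [div_eq_mul_inv, inv_inv, Finset.mul_sum]

end ProbabilityTheory

/-- If `U = (U₁, …, U_d)` is a random vector with independent
components, where `Uᵢ` has the reverse exponential density `x ↦ aᵢ⁻¹ exp(x/aᵢ)` on
`(-∞, 0)` with `aᵢ > 0`, then `E[exp (maxᵢ Uᵢ)] = (Σᵢ aᵢ⁻¹) / (1 + Σᵢ aᵢ⁻¹)`. -/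
theorem expectation_exp_max_reverse_exponential
    {d : ℕ} [NeZero d] (a : Fin d → ℝ) (ha : ∀ i, 0 < a i)
    {Ω : Type*} [MeasurableSpace Ω] (P : Measure Ω) [IsProbabilityMeasure P]
    (U : Fin d → Ω → ℝ)
    (hmeas : ∀ i, Measurable (U i))
    (hindep : iIndepFun U P)
    (hlaw : ∀ i, Measure.map (U i) P = volume.withDensity (fun x =>
      ENNReal.ofReal (Set.indicator (Set.Iio (0 : ℝ))
        (fun x => (a i)⁻¹ * Real.exp (x / a i)) x))) :
    ∫ ω, Real.exp (⨆ i, U i ω) ∂P =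
      (∑ i, (a i)⁻¹) / (1 + ∑ i, (a i)⁻¹) := by
  have hrate : 0 < ∑ i, (a i)⁻¹ := Finset.sum_pos (fun i _ => inv_pos.2 (ha i)) Finset.univ_nonempty
  have hmax : Measurable fun ω => ⨆ i, U i ω := .iSup hmeas
  calc ∫ ω, exp (⨆ i, U i ω) ∂P
      = ∫ x, exp (1 * x) ∂reverseExpMeasure (∑ i, (a i)⁻¹)⁻¹ := by
        rw [← map_iSup_eq_reverseExpMeasure ha hmeas hindep hlaw,
          integral_map hmax.aemeasurable (by fun_prop)]
        simp only [one_mul]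
    _ = (∑ i, (a i)⁻¹) / (1 + ∑ i, (a i)⁻¹) := by
        rw [integral_exp_mul_reverseExpMeasure (inv_pos.2 hrate) (by positivity)]
        generalize ∑ i, (a i)⁻¹ = s at hrate ⊢
        field_simp
        ring
end

section
/- Let d ≥ 1, a₁, …, a_d > 0, and set A = Σ_{i=1}^d a_i⁻¹. Define h(z) = A⁻¹ · exp(−(max_i z_i)(1 + A)) · Π_{i=1}^d a_i⁻¹ exp(z_i/a_i) for z ∈ ℝ^d with max_i z_i > 0, and h(z) = 0 otherwise. Then h is a probability density: ∫_{ℝ^d} h(z) dz = 1. -/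
/-!
With `rᵢ = aᵢ⁻¹` and `A = ∑ rᵢ`: under the measure with density `∏ rᵢ exp (rᵢ zᵢ)`, the event
`max z ≤ t` is the box `(-∞, t]ᵈ`, of mass `∏ exp (rᵢ t) = exp (A t)`, so `max z` has density
`A exp (A t)`. Hence `∫ h = A⁻¹ ∫₀^∞ exp (-(1 + A) t) A exp (A t) dt = A⁻¹ A = 1`.
-/

open MeasureTheory Real Set
open scoped ENNReal

lemma integral_Iic_mul_exp_mul {r : ℝ} (hr : 0 < r) (t : ℝ) :
    ∫ x in Iic t, r * exp (r * x) = exp (r * t) := by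
  rw [integral_const_mul, integral_exp_mul_Iic hr, mul_div_cancel₀ _ hr.ne']

lemma lintegral_Iic_mul_exp_mul {r : ℝ} (hr : 0 < r) (t : ℝ) :
    ∫⁻ x in Iic t, ENNReal.ofReal (r * exp (r * x)) = ENNReal.ofReal (exp (r * t)) := by
  rw [← ofReal_integral_eq_lintegral_ofReal ((integrableOn_exp_mul_Iic hr t).const_mul r)
    (ae_of_all _ fun x => by positivity), integral_Iic_mul_exp_mul hr]

lemma MeasureTheory.Measure.ext_of_Iic_of_ne_top (μ ν : Measure ℝ) (hμ : ∀ t, μ (Iic t) ≠ ∞)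
    (h : ∀ t, μ (Iic t) = ν (Iic t)) : μ = ν := by
  refine Measure.ext_of_Ioc' μ ν (fun a b _ => ne_top_of_le_ne_top (hμ b) ?_) fun a b hab => ?_
  · exact measure_mono Ioc_subset_Iic_self
  · have hsub : Iic a ⊆ Iic b := Iic_subset_Iic.2 hab.le
    rw [← Iic_sdiff_Iic, measure_sdiff hsub measurableSet_Iic.nullMeasurableSet (hμ a),
      measure_sdiff hsub measurableSet_Iic.nullMeasurableSet (h a ▸ hμ a), h a, h b]

variable {ι : Type*} [Fintype ι]

lemma indicator_univ_pi_prod_apply {α M : Type*} [CommMonoidWithZero M] {s : ι → Set α}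
    (f : ι → α → M) (z : ι → α) :
    (Set.pi univ s).indicator (fun z => ∏ i, f i (z i)) z = ∏ i, (s i).indicator (f i) (z i) := by
  by_cases hz : z ∈ Set.pi univ s
  · rw [indicator_of_mem hz]
    exact Finset.prod_congr rfl fun i _ => (indicator_of_mem (hz i (mem_univ i)) _).symm
  · obtain ⟨i, -, hi⟩ := not_forall₂.mp hz
    rw [indicator_of_notMem hz, Finset.prod_eq_zero (Finset.mem_univ i) (indicator_of_notMem hi _)]

lemma lintegral_univ_pi_Iic_prod_mul_exp_mul {r : ι → ℝ} (hr : ∀ i, 0 < r i) (t : ℝ) :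
    ∫⁻ z in Set.pi univ fun _ => Iic t, ENNReal.ofReal (∏ i, r i * exp (r i * z i))
      = ENNReal.ofReal (exp ((∑ i, r i) * t)) := by
  set f : ι → ℝ → ℝ := fun i => (Iic t).indicator fun x => r i * exp (r i * x)
  have hf_int : ∀ i, Integrable (f i) := fun i =>
    IntegrableOn.integrable_indicator ((integrableOn_exp_mul_Iic (hr i) t).const_mul _)
      measurableSet_Iic
  have hf_nonneg : ∀ i x, 0 ≤ f i x := fun i x =>
    indicator_nonneg (fun x _ => by have := hr i; positivity) x
  have hf_integral : ∀ i, ∫ x, f i x = exp (r i * t) := fun i => by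
    rw [integral_indicator measurableSet_Iic, integral_Iic_mul_exp_mul (hr i)]
  have hprod_int : Integrable fun z : ι → ℝ => ∏ i, f i (z i) := Integrable.fintype_prod hf_int
  have hind : ∀ z : ι → ℝ, (Set.pi univ fun _ => Iic t).indicator
      (fun z => ENNReal.ofReal (∏ i, r i * exp (r i * z i))) z = ENNReal.ofReal (∏ i, f i (z i)) :=
    fun z => by
      rw [← indicator_univ_pi_prod_apply]
      exact congrFun (indicator_comp_of_zero (g := ENNReal.ofReal) ENNReal.ofReal_zero) z
  rw [← lintegral_indicator (MeasurableSet.univ_pi fun _ => measurableSet_Iic),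
    lintegral_congr hind,
    ← ofReal_integral_eq_lintegral_ofReal hprod_int
      (ae_of_all _ fun z => Finset.prod_nonneg fun i _ => hf_nonneg i (z i)),
    integral_fintype_prod_volume_eq_prod, Finset.prod_congr rfl fun i _ => hf_integral i,
    ← exp_sum, Finset.sum_mul]

variable [Nonempty ι]

lemma preimage_iSup_Iic (t : ℝ) :
    (fun z : ι → ℝ => ⨆ i, z i) ⁻¹' Iic t = Set.pi univ fun _ => Iic t := by
  ext z
  simp only [mem_preimage, mem_Iic, mem_univ_pi, ciSup_le_iff (Finite.bddAbove_range z)]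

theorem map_iSup_withDensity_prod_mul_exp_mul {r : ι → ℝ} (hr : ∀ i, 0 < r i) :
    (volume.withDensity fun z : ι → ℝ => ENNReal.ofReal (∏ i, r i * exp (r i * z i))).map
        (fun z => ⨆ i, z i)
      = volume.withDensity fun t => ENNReal.ofReal ((∑ i, r i) * exp ((∑ i, r i) * t)) := by
  have hR : 0 < ∑ i, r i := Finset.sum_pos (fun i _ => hr i) Finset.univ_nonempty
  have hIic : ∀ t, ((volume.withDensity fun z : ι → ℝ =>
      ENNReal.ofReal (∏ i, r i * exp (r i * z i))).map (fun z => ⨆ i, z i)) (Iic t)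
        = ENNReal.ofReal (exp ((∑ i, r i) * t)) := fun t => by
    rw [Measure.map_apply (by fun_prop) measurableSet_Iic, preimage_iSup_Iic,
      withDensity_apply _ (MeasurableSet.univ_pi fun _ => measurableSet_Iic),
      lintegral_univ_pi_Iic_prod_mul_exp_mul hr]
  refine Measure.ext_of_Iic_of_ne_top _ _ (fun t => hIic t ▸ ENNReal.ofReal_ne_top) fun t => ?_
  rw [hIic, withDensity_apply _ measurableSet_Iic, lintegral_Iic_mul_exp_mul hR]

lemma lintegral_exp_neg_iSup_mul_prod_mul_exp_mul {r : ι → ℝ} (hr : ∀ i, 0 < r i) :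
    ∫⁻ z in {z : ι → ℝ | 0 < ⨆ i, z i},
        ENNReal.ofReal (exp (-(⨆ i, z i) * (1 + ∑ i, r i)) * ∏ i, r i * exp (r i * z i))
      = ENNReal.ofReal (∑ i, r i) := by
  set R := ∑ i, r i
  have hR : 0 < R := Finset.sum_pos (fun i _ => hr i) Finset.univ_nonempty
  have hM : Measurable fun z : ι → ℝ => ⨆ i, z i := by fun_prop
  have hρ : Measurable fun z : ι → ℝ => ENNReal.ofReal (∏ i, r i * exp (r i * z i)) := by
    fun_prop
  have hG : Measurable fun t : ℝ => ENNReal.ofReal (exp (-t * (1 + R))) := by fun_prop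
  have hGM : Measurable fun z : ι → ℝ => ENNReal.ofReal (exp (-(⨆ i, z i) * (1 + R))) :=
    hG.comp hM
  calc ∫⁻ z in {z : ι → ℝ | 0 < ⨆ i, z i},
        ENNReal.ofReal (exp (-(⨆ i, z i) * (1 + R)) * ∏ i, r i * exp (r i * z i))
      = ∫⁻ z in (fun z : ι → ℝ => ⨆ i, z i) ⁻¹' Ioi 0, ENNReal.ofReal (exp (-(⨆ i, z i) * (1 + R)))
          ∂(volume.withDensity fun z : ι → ℝ => ENNReal.ofReal (∏ i, r i * exp (r i * z i))) := by
        rw [setLIntegral_withDensity_eq_setLIntegral_mul _ hρ hGM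
          (measurableSet_Ioi.preimage hM)]
        refine lintegral_congr fun z => ?_
        rw [Pi.mul_apply, ← ENNReal.ofReal_mul
          (Finset.prod_nonneg fun i _ => (mul_pos (hr i) (exp_pos _)).le), mul_comm]
    _ = ∫⁻ t in Ioi 0, ENNReal.ofReal (exp (-t * (1 + R)))
          ∂(volume.withDensity fun t => ENNReal.ofReal (R * exp (R * t))) := by
        rw [← map_iSup_withDensity_prod_mul_exp_mul hr, setLIntegral_map measurableSet_Ioi hG hM]
    _ = ∫⁻ t in Ioi 0, ENNReal.ofReal (R * exp (-t)) := by
        rw [setLIntegral_withDensity_eq_setLIntegral_mul _ (by fun_prop) hG measurableSet_Ioi]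
        refine lintegral_congr fun t => ?_
        rw [Pi.mul_apply, ← ENNReal.ofReal_mul (by positivity), mul_assoc, ← exp_add]
        ring_nf
    _ = ENNReal.ofReal R := by
        rw [← ofReal_integral_eq_lintegral_ofReal ((integrableOn_exp_neg_Ioi 0).const_mul R)
            (ae_of_all _ fun t => by positivity),
          integral_const_mul, integral_exp_neg_Ioi_zero, mul_one]

lemma setIntegral_exp_neg_iSup_mul_prod_mul_exp_mul {r : ι → ℝ} (hr : ∀ i, 0 < r i) :
    ∫ z in {z : ι → ℝ | 0 < ⨆ i, z i},
        exp (-(⨆ i, z i) * (1 + ∑ i, r i)) * ∏ i, r i * exp (r i * z i) = ∑ i, r i := by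
  have hR : 0 ≤ ∑ i, r i := Finset.sum_nonneg fun i _ => (hr i).le
  rw [integral_eq_lintegral_of_nonneg_ae
      (ae_of_all _ fun z => mul_nonneg (exp_pos _).le
        (Finset.prod_nonneg fun i _ => (mul_pos (hr i) (exp_pos _)).le))
      (by fun_prop),
    lintegral_exp_neg_iSup_mul_prod_mul_exp_mul hr, ENNReal.toReal_ofReal hR]

/-- The standardized multivariate generalized Pareto density in the
U-representation with independent reverse exponential generator, i.e.
`h(z) = A⁻¹ exp(-(maxᵢ zᵢ)(1 + A)) Πᵢ aᵢ⁻¹ exp(zᵢ/aᵢ)` for `maxᵢ zᵢ > 0` (with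
`A = Σᵢ aᵢ⁻¹`) and `h(z) = 0` otherwise, is a probability density: `∫ h = 1`. -/
theorem mgpd_U_density_integral_one
    {d : ℕ} [NeZero d] (a : Fin d → ℝ) (ha : ∀ i, 0 < a i)
    (h : (Fin d → ℝ) → ℝ)
    (hh : ∀ z, h z = Set.indicator {z : Fin d → ℝ | 0 < ⨆ i, z i}
      (fun z => (∑ i, (a i)⁻¹)⁻¹ *
        Real.exp (-(⨆ i, z i) * (1 + ∑ i, (a i)⁻¹)) *
        ∏ i, (a i)⁻¹ * Real.exp (z i / a i)) z) :
    ∫ z, h z = 1 := by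
  have hA : 0 < ∑ i, (a i)⁻¹ := Finset.sum_pos (fun i _ => inv_pos.2 (ha i)) Finset.univ_nonempty
  rw [funext hh, integral_indicator (measurableSet_lt measurable_const (by fun_prop))]
  simp_rw [mul_assoc, div_eq_inv_mul]
  rw [integral_const_mul, setIntegral_exp_neg_iSup_mul_prod_mul_exp_mul fun i => inv_pos.2 (ha i),
    inv_mul_cancel₀ hA.ne']
end

section
/- For all real numbers a₁, a₂ > 0, writing a_{(1)} = min(a₁, a₂) and a_{(2)} = max(a₁, a₂), one has ((1 + a_{(1)})/(1 + a_{(2)}))^{1 + 1/a_{(2)}} · (a_{(2)}/a_{(1)}) · a₁a₂/(a₁a₂ + a₁ + a₂) < 1; equivalently, the tail dependence coefficient χ = 1 − ((1 + a_{(1)})/(1 + a_{(2)}))^{1 + 1/a_{(2)}} · (a_{(2)}/a_{(1)}) · a₁a₂/(a₁a₂ + a₁ + a₂) is strictly positive. -/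
lemma chi_key (m M : ℝ) (hm : 0 < m) (hmM : m ≤ M) :
    ((1 + m) / (1 + M)) ^ (1 + 1 / M) * (M / m) * (m * M / (m * M + m + M)) < 1 := by
  have hM : 0 < M := hm.trans_le hmM
  have h1M : (0:ℝ) < 1 + M := by linarith
  have hb : 0 < (1 + m) / (1 + M) := by positivity
  have hb1 : (1 + m) / (1 + M) ≤ 1 := by
    rw [div_le_one h1M]; linarith
  have hp : ((1 + m) / (1 + M)) ^ (1 + 1 / M) ≤ (1 + m) / (1 + M) := by
    calc ((1 + m) / (1 + M)) ^ (1 + 1 / M)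
        ≤ ((1 + m) / (1 + M)) ^ (1:ℝ) :=
          Real.rpow_le_rpow_of_exponent_ge hb hb1 (le_add_of_nonneg_right (by positivity))
      _ = (1 + m) / (1 + M) := Real.rpow_one _
  have hfac : 0 ≤ (M / m) * (m * M / (m * M + m + M)) := by positivity
  have hlt : (1 + m) / (1 + M) * (M / m) * (m * M / (m * M + m + M)) < 1 := by
    rw [div_mul_div_comm, div_mul_div_comm, div_lt_one (by positivity)]
    nlinarith [mul_pos hm hM, mul_pos (mul_pos hm hm) hM, mul_pos hm (mul_pos hM hM)]
  calc ((1 + m) / (1 + M)) ^ (1 + 1 / M) * (M / m) * (m * M / (m * M + m + M))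
      = ((1 + m) / (1 + M)) ^ (1 + 1 / M) * ((M / m) * (m * M / (m * M + m + M))) := by ring
    _ ≤ (1 + m) / (1 + M) * ((M / m) * (m * M / (m * M + m + M))) :=
        mul_le_mul_of_nonneg_right hp hfac
    _ = (1 + m) / (1 + M) * (M / m) * (m * M / (m * M + m + M)) := by ring
    _ < 1 := hlt

/-- For all `a₁, a₂ > 0`, writing `a₍₁₎ = min(a₁,a₂)` and
`a₍₂₎ = max(a₁,a₂)`,
`((1 + a₍₁₎)/(1 + a₍₂₎))^(1 + 1/a₍₂₎) · (a₍₂₎/a₍₁₎) · a₁a₂/(a₁a₂ + a₁ + a₂) < 1`;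
equivalently the tail dependence coefficient
`χ = 1 - ((1 + a₍₁₎)/(1 + a₍₂₎))^(1 + 1/a₍₂₎) · (a₍₂₎/a₍₁₎) · a₁a₂/(a₁a₂ + a₁ + a₂)`
is strictly positive. -/
theorem chi_positive (a₁ a₂ : ℝ) (h₁ : 0 < a₁) (h₂ : 0 < a₂) :
    ((1 + min a₁ a₂) / (1 + max a₁ a₂)) ^ (1 + 1 / max a₁ a₂) *
        (max a₁ a₂ / min a₁ a₂) * (a₁ * a₂ / (a₁ * a₂ + a₁ + a₂)) < 1 := by
  rcases le_total a₁ a₂ with h | h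
  · rw [min_eq_left h, max_eq_right h]
    have := chi_key a₁ a₂ h₁ h
    have e : a₁ * a₂ + a₁ + a₂ = a₁ * a₂ + a₁ + a₂ := rfl
    convert this using 3
  · rw [min_eq_right h, max_eq_left h]
    have := chi_key a₂ a₁ h₂ h
    have e1 : a₁ * a₂ = a₂ * a₁ := mul_comm _ _
    have e2 : a₁ * a₂ + a₁ + a₂ = a₂ * a₁ + a₂ + a₁ := by ring
    rw [e1, e2] at *
    convert this using 3
end

section
/- Let F_bulk be the cdf of a nondegenerate bivariate Gaussian distribution on ℝ² with density f_bulk, let u = (u₁, u₂) ∈ ℝ² with 0 < F_bulk(u) < 1, and let H be a bivariate generalized Pareto distribution with density h whose support lies in {w ∈ ℝ² : w₁ ≥ 0, w₂ ≤ 0} (first marginal lower endpoint 0, second marginal upper endpoint 0), with marginal cdfs H₁ and H₂. Let F be the bivariate cdf with density f(x) = f_bulk(x)·1{x ≤ u} + (1 − F_bulk(u))·h(x − u)·1{x ≰ u}, with marginal cdfs F₁ and F₂. Then: (i) for all x₁ ≥ u₁, F₁(x₁) = F_bulk(u₁, u₂) + (1 − F_bulk(u₁, u₂))·H₁(x₁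 − u₁); and (ii) for all x₂ ≤ u₂, F₂(x₂) = F_bulk(u₁, x₂) + (1 − F_bulk(u₁, u₂))·H₂(x₂ − u₂). -/
open Filter Topology

/-- A (loose) notion of a `d`-variate cumulative distribution function:
monotone w.r.t. the componentwise order, with values in `[0,1]`,
tending to `1` at `+∞` and to `0` at `-∞`. -/
def IsCDFd {d : ℕ} (F : (Fin d → ℝ) → ℝ) : Prop :=
  Monotone F ∧ (∀ x, 0 ≤ F x ∧ F x ≤ 1) ∧
    Tendsto F atTop (𝓝 1) ∧ Tendsto F atBot (𝓝 0)

/-- `Fi` is the `i`-th univariate margin of the `d`-variate cdf `F`: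
`Fi t` is the limit of `F` as all coordinates other than `i` tend to `+∞`. -/
def IsMarginD {d : ℕ} (F : (Fin d → ℝ) → ℝ) (i : Fin d) (Fi : ℝ → ℝ) : Prop :=
  ∀ t : ℝ, Tendsto (fun M : ℝ => F (fun j => if j = i then t else M)) atTop (𝓝 (Fi t))

/-- `G` is max-stable (an mGEVD): it has nondegenerate univariate margins and for
every `n ≥ 1` there are `αₙ ∈ (0,∞)^d`, `βₙ ∈ ℝ^d` with `G(αₙ x + βₙ)^n = G(x)`. -/
def MaxStableD {d : ℕ} (G : (Fin d → ℝ) → ℝ) : Prop :=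
  (∀ i, ∃ Gi, IsMarginD G i Gi ∧ Nondeg1 Gi) ∧
  ∀ n : ℕ, 1 ≤ n → ∃ α β : Fin d → ℝ, (∀ i, 0 < α i) ∧
    ∀ x, (G (fun i => α i * x i + β i)) ^ n = G x

/-- `F` is in the max-domain of attraction of `G`: there are sequences
`aₙ ∈ (0,∞)^d`, `bₙ ∈ ℝ^d` with `F(aₙ x + bₙ)^n → G(x)` at every continuity point of `G`. -/
def MDAd {d : ℕ} (F G : (Fin d → ℝ) → ℝ) : Prop :=
  ∃ a b : ℕ → Fin d → ℝ, (∀ n i, 0 < a n i) ∧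
    ∀ x, ContinuousAt G x →
      Tendsto (fun n => (F (fun i => a n i * x i + b n i)) ^ n) atTop (𝓝 (G x))

open MeasureTheory Matrix

/-! Splitting `Iic p` at `u`, the mixture cdf is `F p = Fbulk (p ⊓ u) + (1 - Fbulk u) * H (p - u)`:
the tail part, translated by `u`, integrates `h` over `Iic (p - u) \ Iic 0`, which differs from
`Iic (p - u)` only inside the null hyperplane `w 0 = 0` because `h` lives on `w 0 ≥ 0`. As the
other coordinate of `p` tends to `+∞`, `p ⊓ u` freezes at `u` (resp. `(u 0, x₂)`) and `H (p - u)`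
tends to the corresponding margin of `H`. -/
open Set

section Mixture

variable {ι : Type*} [Fintype ι]

lemma setIntegral_Iic_eq_bulk_add_tail {u p : ι → ℝ} {fbulk h f : (ι → ℝ) → ℝ} {c : ℝ}
    (hf₁ : ∀ x, x ≤ u → f x = fbulk x)
    (hf₂ : ∀ x, ¬ x ≤ u → f x = c * h (x - u))
    (hbulk : IntegrableOn fbulk (Iic u))
    (htail : IntegrableOn h (Iic (p - u) \ Iic 0)) :
    ∫ y in Iic p, f y =
      (∫ y in Iic (p ⊓ u), fbulk y) + c * ∫ y in Iic (p - u) \ Iic 0, h y := by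
  have hshift := measurePreserving_sub_right (volume : Measure (ι → ℝ)) u
  have hemb := (MeasurableEquiv.subRight u).measurableEmbedding
  have hpre : (· - u) ⁻¹' (Iic (p - u) \ Iic 0) = Iic p \ Iic u := by
    ext x; simp
  have hf_bulk : EqOn f fbulk (Iic (p ⊓ u)) := fun x hx => hf₁ x (le_inf_iff.1 hx).2
  have hf_tail : EqOn f (fun x => c * h (x - u)) (Iic p \ Iic u) := fun x hx => hf₂ x hx.2
  have hint_bulk : IntegrableOn f (Iic (p ⊓ u)) :=
    (hbulk.mono_set (Iic_subset_Iic.2 inf_le_right)).congr_fun hf_bulk.symm measurableSet_Iic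
  have hint_tail : IntegrableOn f (Iic p \ Iic u) := by
    refine IntegrableOn.congr_fun ?_ hf_tail.symm (measurableSet_Iic.diff measurableSet_Iic)
    rw [← hpre]
    exact ((hshift.integrableOn_comp_preimage hemb).2 htail).const_mul c
  calc ∫ y in Iic p, f y = (∫ y in Iic (p ⊓ u), f y) + ∫ y in Iic p \ Iic u, f y := by
        rw [← setIntegral_union (disjoint_sdiff_right.mono_left (Iic_subset_Iic.2 inf_le_right))
          (measurableSet_Iic.diff measurableSet_Iic) hint_bulk hint_tail, ← Iic_inter_Iic,
          inter_union_sdiff]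
    _ = (∫ y in Iic (p ⊓ u), fbulk y) + ∫ y in Iic p \ Iic u, c * h (y - u) := by
        rw [setIntegral_congr_fun measurableSet_Iic hf_bulk,
          setIntegral_congr_fun (measurableSet_Iic.diff measurableSet_Iic) hf_tail]
    _ = (∫ y in Iic (p ⊓ u), fbulk y) + c * ∫ y in Iic (p - u) \ Iic 0, h y := by
        rw [integral_const_mul, ← hpre, hshift.setIntegral_preimage_emb hemb h]

lemma setIntegral_Iic_sdiff_Iic_zero {h : (ι → ℝ) → ℝ} {i : ι}
    (hsupp : ∀ w, h w ≠ 0 → 0 ≤ w i) (q : ι → ℝ) :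
    ∫ y in Iic q \ Iic 0, h y = ∫ y in Iic q, h y := by
  refine (setIntegral_eq_of_subset_of_ae_sdiff_eq_zero measurableSet_Iic.nullMeasurableSet
    sdiff_subset ?_).symm
  filter_upwards [Measure.ae_eval_ne (fun _ : ι => (volume : Measure ℝ)) i 0] with y hy hyq
  have hy_nonpos : y ≤ 0 := not_not.1 fun hy' => hyq.2 ⟨hyq.1, hy'⟩
  by_contra hne
  exact hy (le_antisymm (hy_nonpos i) (hsupp y hne))

end Mixture

lemma integrableOn_Iic_of_eventually_setIntegral_ne_zero {α E : Type*} [MeasurableSpace α]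
    [Preorder α] [IsDirectedOrder α] [Nonempty α] [NormedAddCommGroup E] [NormedSpace ℝ E]
    {μ : Measure α} {h : α → E} (hev : ∀ᶠ x in atTop, ∫ w in Iic x, h w ∂μ ≠ 0) (q : α) :
    IntegrableOn h (Iic q) μ := by
  obtain ⟨x, hx, hqx⟩ := (hev.and (eventually_ge_atTop q)).exists
  exact IntegrableOn.mono_set (Integrable.of_integral_ne_zero hx) (Iic_subset_Iic.2 hqx)

noncomputable def mGPD {α : Type*} [Lattice α] [Zero α] (G : α → ℝ) (x : α) : ℝ :=
  Real.log (G (x ⊓ 0) / G x) / Real.log (G 0)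

lemma tendsto_mGPD_atTop {α : Type*} [Lattice α] [Zero α] {G : α → ℝ}
    (hG : Tendsto G atTop (𝓝 1)) (hG0 : 0 < G 0) (hG1 : G 0 < 1) :
    Tendsto (mGPD G) atTop (𝓝 1) := by
  have hlim : Tendsto (fun x => Real.log (G 0 / G x) / Real.log (G 0)) atTop
      (𝓝 (Real.log (G 0 / 1) / Real.log (G 0))) :=
    ((tendsto_const_nhds.div hG one_ne_zero).log (by simpa using hG0.ne')).div_const _
  rw [div_one, div_self (Real.log_neg hG0 hG1).ne] at hlim
  refine hlim.congr' ?_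
  filter_upwards [eventually_ge_atTop 0] with x hx
  rw [mGPD, inf_eq_right.2 hx]

lemma IsMarginD.eq_of_eq_inf_add_sub {F A H : (Fin 2 → ℝ) → ℝ} {u : Fin 2 → ℝ} {c : ℝ}
    {i : Fin 2} {Fi Hi : ℝ → ℝ} (hF : IsMarginD F i Fi) (hH : IsMarginD H i Hi)
    (hmix : ∀ p, F p = A (p ⊓ u) + c * H (p - u)) (t : ℝ) :
    Fi t = A (fun j => if j = i then min t (u i) else u j) + c * Hi (t - u i) := by
  have hshift : Tendsto (fun M => H ((fun j => if j = i then t else M) - u)) atTop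
      (𝓝 (Hi (t - u i))) := by
    refine ((hH (t - u i)).comp (tendsto_atTop_add_const_right _ (-u i.rev) tendsto_id)).congr
      fun M => congrArg H (funext fun j => ?_)
    fin_cases i <;> fin_cases j <;> simp [sub_eq_add_neg]
  refine tendsto_nhds_unique (hF t) (((hshift.const_mul c).const_add _).congr' ?_)
  filter_upwards [eventually_ge_atTop (u 0), eventually_ge_atTop (u 1)] with M h0 h1
  rw [hmix]
  congr 2
  funext j
  fin_cases i <;> fin_cases j <;> simp [h0, h1]

theorem mixture_margins_general
    (fbulk Fbulk : (Fin 2 → ℝ) → ℝ)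
    (hFb : ∀ x, Fbulk x = ∫ y in Set.Iic x, fbulk y)
    (u : Fin 2 → ℝ) (h0 : 0 < Fbulk u)
    (G H : (Fin 2 → ℝ) → ℝ)
    (hGcdf : IsCDFd G) (hG0 : 0 < G 0) (hG1 : G 0 < 1)
    (hH : ∀ x, H x = Real.log (G (x ⊓ 0) / G x) / Real.log (G 0))
    (h : (Fin 2 → ℝ) → ℝ)
    (hhd : ∀ x, H x = ∫ w in Set.Iic x, h w)
    (hsupp : ∀ w, h w ≠ 0 → 0 ≤ w 0 ∧ w 1 ≤ 0)
    (H₁ H₂ : ℝ → ℝ) (hH₁ : IsMarginD H 0 H₁) (hH₂ : IsMarginD H 1 H₂)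
    (f F : (Fin 2 → ℝ) → ℝ)
    (hf₁ : ∀ x, x ≤ u → f x = fbulk x)
    (hf₂ : ∀ x, ¬ x ≤ u → f x = (1 - Fbulk u) * h (x - u))
    (hF : ∀ x, F x = ∫ y in Set.Iic x, f y)
    (F₁ F₂ : ℝ → ℝ) (hF₁ : IsMarginD F 0 F₁) (hF₂ : IsMarginD F 1 F₂) :
    (∀ x₁ : ℝ, u 0 ≤ x₁ →
        F₁ x₁ = Fbulk u + (1 - Fbulk u) * H₁ (x₁ - u 0)) ∧
      (∀ x₂ : ℝ, x₂ ≤ u 1 →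
        F₂ x₂ = Fbulk ![u 0, x₂] + (1 - Fbulk u) * H₂ (x₂ - u 1)) := by
  have hbulk : IntegrableOn fbulk (Iic u) := .of_integral_ne_zero (hFb u ▸ h0.ne')
  have hH_eq : H = mGPD G := funext hH
  -- `H → 1` at `+∞` keeps `∫ h` off the junk value `0` of a non-integrable integral.
  have htail : ∀ q, IntegrableOn h (Iic q) :=
    integrableOn_Iic_of_eventually_setIntegral_ne_zero <| by
      filter_upwards [(tendsto_mGPD_atTop hGcdf.2.2.1 hG0 hG1).eventually_ne one_ne_zero]
        with x hx
      rwa [← hhd, hH_eq]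
  have hmix : ∀ p, F p = Fbulk (p ⊓ u) + (1 - Fbulk u) * H (p - u) := fun p => by
    rw [hF, hFb, hhd, ← setIntegral_Iic_sdiff_Iic_zero (fun w hw => (hsupp w hw).1),
      setIntegral_Iic_eq_bulk_add_tail hf₁ hf₂ hbulk ((htail _).mono_set sdiff_subset)]
  refine ⟨fun x₁ hx₁ => ?_, fun x₂ hx₂ => ?_⟩
  · rw [hF₁.eq_of_eq_inf_add_sub hH₁ hmix, min_eq_right hx₁]
    congr 2
    funext j
    fin_cases j <;> rfl
  · rw [hF₂.eq_of_eq_inf_add_sub hH₂ hmix, min_eq_left hx₂]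
    congr 2
    funext j
    fin_cases j <;> rfl

/-- For the bivariate extreme mixture with nondegenerate Gaussian
bulk (density `fbulk`, cdf `Fbulk`, with `0 < Fbulk u < 1`) and a bivariate
generalized Pareto tail `H` (associated with a max-stable `G`, density `h`) supported
in `{w | w 0 ≥ 0 ∧ w 1 ≤ 0}`, with marginal cdfs `H₁`, `H₂`, the margins `F₁`, `F₂`
of the mixture cdf `F` satisfy:
(i) `F₁ x₁ = Fbulk (u₁,u₂) + (1 - Fbulk (u₁,u₂)) H₁ (x₁ - u₁)` for `x₁ ≥ u₁`, and
(ii) `F₂ x₂ = Fbulk (u₁,x₂) + (1 - Fbulk (u₁,u₂)) H₂ (x₂ - u₂)` for `x₂ ≤ u₂`. -/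
theorem mixture_margins
    (μv : Fin 2 → ℝ) (S : Matrix (Fin 2) (Fin 2) ℝ) (hS : S.PosDef)
    (fbulk Fbulk : (Fin 2 → ℝ) → ℝ)
    (hfb : ∀ x, fbulk x = (2 * Real.pi)⁻¹ * (Real.sqrt S.det)⁻¹ *
      Real.exp (-(1 / 2) * ((x - μv) ⬝ᵥ (S⁻¹ *ᵥ (x - μv)))))
    (hFb : ∀ x, Fbulk x = ∫ y in Set.Iic x, fbulk y)
    (u : Fin 2 → ℝ) (h0 : 0 < Fbulk u) (h1 : Fbulk u < 1)
    (G H : (Fin 2 → ℝ) → ℝ)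
    (hGcdf : IsCDFd G) (hGms : MaxStableD G) (hG0 : 0 < G 0) (hG1 : G 0 < 1)
    (hH : ∀ x, H x = Real.log (G (x ⊓ 0) / G x) / Real.log (G 0))
    (h : (Fin 2 → ℝ) → ℝ)
    (hhd : ∀ x, H x = ∫ w in Set.Iic x, h w)
    (hsupp : ∀ w, h w ≠ 0 → 0 ≤ w 0 ∧ w 1 ≤ 0)
    (H₁ H₂ : ℝ → ℝ) (hH₁ : IsMarginD H 0 H₁) (hH₂ : IsMarginD H 1 H₂)
    (f F : (Fin 2 → ℝ) → ℝ)
    (hf₁ : ∀ x, x ≤ u → f x = fbulk x)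
    (hf₂ : ∀ x, ¬ x ≤ u → f x = (1 - Fbulk u) * h (x - u))
    (hF : ∀ x, F x = ∫ y in Set.Iic x, f y)
    (F₁ F₂ : ℝ → ℝ) (hF₁ : IsMarginD F 0 F₁) (hF₂ : IsMarginD F 1 F₂) :
    (∀ x₁ : ℝ, u 0 ≤ x₁ →
        F₁ x₁ = Fbulk u + (1 - Fbulk u) * H₁ (x₁ - u 0)) ∧
      (∀ x₂ : ℝ, x₂ ≤ u 1 →
        F₂ x₂ = Fbulk ![u 0, x₂] + (1 - Fbulk u) * H₂ (x₂ - u 1)) :=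
  mixture_margins_general fbulk Fbulk hFb u h0 G H hGcdf hG0 hG1 hH h hhd hsupp H₁ H₂ hH₁ hH₂ f F
    hf₁ hf₂ hF F₁ F₂ hF₁ hF₂
end
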